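/- Let M be a 4×4 symmetric positive definite real matrix and let u₁, u₂, u₃, u₄ ∈ ℝ^4 satisfy the reduced-basis property: for every i ∈ {1,2,3,4} and every vector z that is an integer linear combination of the u_j with j ≠ i, one has 2|⟨z, u_i⟩_M| ≤ ‖z‖_M². Let (v₁,v₂,v₃,v₄) be any permutation of (ε₁u₁, ε₂u₂, ε₃u₃, ε₄u₄) with ε_i ∈ {−1,1}. Then all pairwise M-scalar products among the vectors v₁, v₁+v₂, v₁+v₂+v₃, 2v₁+v₂+v₃+v₄ are nonnegative, and all pairwise M-scalar products among v₁+v₂, v₁+v₂+v₃, v₁+v₂+v₃+v₄, 2v₁+v₂+v₃+v₄ are nonnegative. -/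

import Mathlib

noncomputable def mprod {d : ℕ} (M : Matrix (Fin d) (Fin d) ℝ) (u v : Fin d → ℝ) : ℝ :=
  dotProduct u (M.mulVec v)

noncomputable def mnorm {d : ℕ} (M : Matrix (Fin d) (Fin d) ℝ) (u : Fin d → ℝ) : ℝ :=
  Real.sqrt (mprod M u u)

/-- The volume of the `d`-dimensional Euclidean unit ball. -/
noncomputable def unitBallVol (d : ℕ) : ℝ :=
  (MeasureTheory.volume (Metric.ball (0 : EuclideanSpace ℝ (Fin d)) 1)).toReal

/-- `isHaarOnO d μ` : `μ` is the Haar probability measure of the orthogonal group `O(d)`,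
viewed as a measure on the space of `d×d` real matrices, characterized (uniquely) by being a
probability measure supported on `O(d)` and invariant under left translation by any element
of `O(d)`. -/

instance matrixMeasurableSpace {d : ℕ} : MeasurableSpace (Matrix (Fin d) (Fin d) ℝ) :=
  (inferInstance : MeasurableSpace (Fin d → Fin d → ℝ))

def isHaarOnO (d : ℕ) (μ : MeasureTheory.Measure (Matrix (Fin d) (Fin d) ℝ)) : Prop :=
  MeasureTheory.IsProbabilityMeasure μ ∧
  μ { R | R ∉ Matrix.orthogonalGroup (Fin d) ℝ } = 0 ∧
  ∀ Q ∈ Matrix.orthogonalGroup (Fin d) ℝ, MeasureTheory.Measure.map (fun R => Q * R) μ = μ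

lemma mprod_add_left {d : ℕ} (M : Matrix (Fin d) (Fin d) ℝ) (x y z : Fin d → ℝ) :
    mprod M (x + y) z = mprod M x z + mprod M y z := by
  simp [mprod, add_dotProduct]

lemma mprod_add_right {d : ℕ} (M : Matrix (Fin d) (Fin d) ℝ) (x y z : Fin d → ℝ) :
    mprod M x (y + z) = mprod M x y + mprod M x z := by
  simp [mprod, Matrix.mulVec_add, dotProduct_add]

lemma mprod_smul_right {d : ℕ} (M : Matrix (Fin d) (Fin d) ℝ) (c : ℝ) (x y : Fin d → ℝ) :
    mprod M x (c • y) = c * mprod M x y := by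
  simp [mprod, Matrix.mulVec_smul, dotProduct_smul]

lemma mprod_comm {d : ℕ} (M : Matrix (Fin d) (Fin d) ℝ) (hMs : M.IsSymm) (x y : Fin d → ℝ) :
    mprod M x y = mprod M y x := by
  rw [mprod, Matrix.dotProduct_mulVec, ← Matrix.mulVec_transpose, hMs.eq, dotProduct_comm]
  rfl

lemma mprod_self_nonneg {d : ℕ} (M : Matrix (Fin d) (Fin d) ℝ) (hM : M.PosDef)
    (x : Fin d → ℝ) : 0 ≤ mprod M x x := by
  have := hM.posSemidef.dotProduct_mulVec_nonneg x
  simpa [mprod] using this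

set_option maxHeartbeats 2000000 in
theorem stmt19 (M : Matrix (Fin 4) (Fin 4) ℝ) (hMs : M.IsSymm) (hM : M.PosDef)
    (u : Fin 4 → (Fin 4 → ℝ))
    (hred : ∀ i : Fin 4, ∀ c : Fin 4 → ℤ, c i = 0 →
      2 * |mprod M (∑ j, (c j : ℝ) • u j) (u i)|
        ≤ (mnorm M (∑ j, (c j : ℝ) • u j)) ^ 2)
    (σ : Equiv.Perm (Fin 4)) (ε : Fin 4 → ℝ) (hε : ∀ i, ε i = 1 ∨ ε i = -1)
    (v : Fin 4 → (Fin 4 → ℝ)) (hv : ∀ i, v i = ε (σ i) • u (σ i)) :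
    (∀ a b : Fin 4,
      0 ≤ mprod M (![v 0, v 0 + v 1, v 0 + v 1 + v 2,
          2 • v 0 + v 1 + v 2 + v 3] a)
        (![v 0, v 0 + v 1, v 0 + v 1 + v 2, 2 • v 0 + v 1 + v 2 + v 3] b)) ∧
    (∀ a b : Fin 4,
      0 ≤ mprod M (![v 0 + v 1, v 0 + v 1 + v 2, v 0 + v 1 + v 2 + v 3,
          2 • v 0 + v 1 + v 2 + v 3] a)
        (![v 0 + v 1, v 0 + v 1 + v 2, v 0 + v 1 + v 2 + v 3,
          2 • v 0 + v 1 + v 2 + v 3] b)) := by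
  -- the reduced-basis property transfers from `u` to `v`
  have hredv : ∀ i : Fin 4, ∀ c : Fin 4 → ℤ, c i = 0 →
      2 * |mprod M (∑ j, (c j : ℝ) • v j) (v i)|
        ≤ mprod M (∑ j, (c j : ℝ) • v j) (∑ j, (c j : ℝ) • v j) := by
    intro i c hc
    set c' : Fin 4 → ℤ := fun k => if ε k = 1 then c (σ.symm k) else - c (σ.symm k) with hc'
    have hsum : (∑ j, (c j : ℝ) • v j) = ∑ k, (c' k : ℝ) • u k := by
      rw [← Equiv.sum_comp σ (fun k => (c' k : ℝ) • u k)]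
      refine Finset.sum_congr rfl fun j _ => ?_
      rcases hε (σ j) with h | h <;>
        norm_num [hv, hc', h, Equiv.symm_apply_apply, smul_smul]
    have hci' : c' (σ i) = 0 := by
      rcases hε (σ i) with h | h <;> simp [hc', h, hc]
    have h := hred (σ i) c' hci'
    have hnn : 0 ≤ mprod M (∑ k, (c' k : ℝ) • u k) (∑ k, (c' k : ℝ) • u k) :=
      mprod_self_nonneg M hM _
    rw [mnorm, Real.sq_sqrt hnn] at h
    rw [hsum, hv i, mprod_smul_right, abs_mul]
    rcases hε (σ i) with he | he <;> rw [he] <;> simpa using h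
  have hp : ∀ X S : ℝ, 2 * |X| ≤ S → -S ≤ 2 * X ∧ 2 * X ≤ S := by
    intro X S h
    rcases abs_cases X with ⟨h1, h2⟩ | ⟨h1, h2⟩ <;> constructor <;> linarith
  -- specific reduced-basis inequalities
  have R1 := hredv 1 ![1,0,0,0] rfl
  have R2 := hredv 2 ![1,0,0,0] rfl
  have R3 := hredv 3 ![1,0,0,0] rfl
  have R4 := hredv 2 ![1,1,0,0] rfl
  have R5 := hredv 3 ![1,1,0,0] rfl
  have R6 := hredv 3 ![1,1,1,0] rfl
  have R7 := hredv 0 ![0,1,1,1] rfl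
  simp only [Fin.sum_univ_four, Matrix.cons_val_zero, Matrix.cons_val_one, Matrix.head_cons,
    Matrix.cons_val_two, Matrix.tail_cons, Matrix.cons_val_three, Int.cast_one, Int.cast_zero,
    one_smul, zero_smul, add_zero, zero_add] at R1 R2 R3 R4 R5 R6 R7
  obtain ⟨R1a, R1b⟩ := hp _ _ R1
  obtain ⟨R2a, R2b⟩ := hp _ _ R2
  obtain ⟨R3a, R3b⟩ := hp _ _ R3
  obtain ⟨R4a, R4b⟩ := hp _ _ R4
  obtain ⟨R5a, R5b⟩ := hp _ _ R5
  obtain ⟨R6a, R6b⟩ := hp _ _ R6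
  obtain ⟨R7a, R7b⟩ := hp _ _ R7
  -- positive semidefiniteness instances
  have P1 := mprod_self_nonneg M hM (v 0)
  have P2 := mprod_self_nonneg M hM (v 0 + v 1)
  have P3 := mprod_self_nonneg M hM (v 0 + v 1 + v 2)
  have P4 := mprod_self_nonneg M hM (v 0 + v 1 + v 2 + v 3)
  have P5 := mprod_self_nonneg M hM (v 0 + v 0 + v 1 + v 2 + v 3)
  have Pz := mprod_self_nonneg M hM (v 1 + v 2 + v 3)
  -- symmetry instances
  have s10 := mprod_comm M hMs (v 1) (v 0)
  have s20 := mprod_comm M hMs (v 2) (v 0)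
  have s21 := mprod_comm M hMs (v 2) (v 1)
  have s30 := mprod_comm M hMs (v 3) (v 0)
  have s31 := mprod_comm M hMs (v 3) (v 1)
  have s32 := mprod_comm M hMs (v 3) (v 2)
  simp only [mprod_add_left, mprod_add_right] at R1a R1b R2a R2b R3a R3b R4a R4b R5a R5b R6a R6b R7a R7b P1 P2 P3 P4 P5 Pz
  refine ⟨?_, ?_⟩ <;> intro a b <;> fin_cases a <;> fin_cases b <;>
    simp only [show ((⟨0,by norm_num⟩ : Fin 4) = 0) from rfl, show ((⟨1,by norm_num⟩ : Fin 4) = 1) from rfl,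
      show ((⟨2,by norm_num⟩ : Fin 4) = 2) from rfl, show ((⟨3,by norm_num⟩ : Fin 4) = 3) from rfl,
      Matrix.cons_val_zero, Matrix.cons_val_one, Matrix.head_cons,
      Matrix.cons_val_two, Matrix.tail_cons, Matrix.cons_val_three, two_smul,
      mprod_add_left, mprod_add_right] <;>
    linarith [R1a, R1b, R2a, R2b, R3a, R3b, R4a, R4b, R5a, R5b, R6a, R6b, R7a, R7b,
      P1, P2, P3, P4, P5, Pz, s10, s20, s21, s30, s31, s32]
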